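/- arXiv:1210.1097 — 2 statements merged into one kernel-verified Lean document; each statement's English description precedes it below -/
import Mathlib

section
/- A lattice-ordered QMV algebra E is an MV algebra if and only if (a ⊞ b) ∧ (a ⊞ c) = a ⊞ (b ∧ c) for all a, b, c in E. -/
/-- A supplement algebra (S-algebra). -/
class SAlg (E : Type*) where
  add : E → E → E
  cpl : E → E
  zero : E
  one : E
  add_comm : ∀ a b : E, add a b = add b a
  add_assoc : ∀ a b c : E, add a (add b c) = add (add a b) c
  add_cpl : ∀ a : E, add a (cpl a) = one
  add_zero : ∀ a : E, add a zero = a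
  cpl_cpl : ∀ a : E, cpl (cpl a) = a
  add_one : ∀ a : E, add a one = one

namespace SAlg
variable {E : Type*} [SAlg E]
/-- a ⊙ b = (a' ⊞ b')'. -/
def odot (a b : E) : E := cpl (add (cpl a) (cpl b))
/-- a ⊓ b = (a ⊞ b') ⊙ b. -/
def scap (a b : E) : E := odot (add a (cpl b)) b
/-- a ⊔ b = (a ⊙ b') ⊞ b. -/
def scup (a b : E) : E := add (odot a (cpl b)) b
/-- The QMV order: a ≤ b iff a = a ⊓ b. -/
def sle (a b : E) : Prop := a = scap a b
end SAlg
/-- A quantum MV (QMV) algebra. -/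
class QMV (E : Type*) extends SAlg E where
  qmv1 : ∀ a b : E, SAlg.scup a (SAlg.scap b a) = a
  qmv2 : ∀ a b c : E,
    SAlg.scap (SAlg.scap a b) c = SAlg.scap (SAlg.scap a b) (SAlg.scap b c)
  qmv3 : ∀ a b c : E,
    add a (SAlg.scap b (cpl (add a c)))
      = SAlg.scap (add a b) (add a (cpl (add a c)))
  qmv4 : ∀ a b : E, add a (SAlg.scap (cpl a) b) = add a b
  qmv5 : ∀ a b : E, SAlg.scup (add (cpl a) b) (add (cpl b) a) = one

/-!
If `E` is an MV algebra, its order is `x ≤ y ↔ x' ⊞ y = 1`, and for this order `a ⊞ -` is right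
adjoint to `- ⊙ a'`; so it preserves infima, which is the distributive law. Conversely, distributivity
with `a = y'` gives `y' ⊞ x = y' ⊞ (x ∧ y)`, and substituting this in `x ∧ y = (x ∧ y) ⊓ y` yields
`x ∧ y = x ⊓ y`. Hence the QMV meet `⊓` is commutative, and by the duality `a ⊓ b = (a' ⊔ b')'` so is
the QMV join `⊔`, which is the MV axiom.
-/

namespace SAlg

variable {E : Type*} [SAlg E]

-- `⊞` is taken by biproducts of categories.
local infixl:65 " ⊎ " => SAlg.add
local postfix:max "′" => SAlg.cpl

lemma cpl_zero : (zero : E)′ = one := by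
  rw [← add_cpl zero, add_comm, add_zero]

lemma cpl_one : (one : E)′ = zero := by
  rw [← cpl_zero, cpl_cpl]

lemma cpl_injective : Function.Injective (cpl : E → E) :=
  Function.LeftInverse.injective cpl_cpl

lemma sle_one (a : E) : sle a one := by
  rw [sle, scap, odot, cpl_one, add_zero, add_zero, cpl_cpl]

lemma scup_eq (a b : E) : scup a b = (a′ ⊎ b)′ ⊎ b := by
  rw [scup, odot, cpl_cpl]

lemma scap_eq_cpl_scup_cpl (a b : E) : scap a b = (scup a′ b′)′ := by
  rw [scap, odot, scup_eq, cpl_cpl]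

lemma mv_iff_scup_comm :
    (∀ a b : E, (a′ ⊎ b)′ ⊎ b = (a ⊎ b′)′ ⊎ a) ↔ ∀ a b : E, scup a b = scup b a := by
  simp only [scup_eq, add_comm _ (cpl _)]

section MV

variable (hmv : ∀ a b : E, scup a b = scup b a)
include hmv

lemma sle_iff_cpl_add_eq_one {a b : E} : sle a b ↔ a′ ⊎ b = one := by
  rw [sle, scap_eq_cpl_scup_cpl]
  constructor
  · intro hab
    rw [scup_eq, cpl_cpl] at hab
    rw [hab, cpl_cpl, ← add_assoc, add_comm b′, add_cpl, add_one]
  · intro hab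
    rw [hmv, scup_eq, cpl_cpl, add_comm b, hab, cpl_one, add_comm, add_zero, cpl_cpl]

variable [Lattice E] (hord : ∀ a b : E, a ≤ b ↔ sle a b)
include hord

lemma odot_cpl_le_iff {a d x : E} : odot d a′ ≤ x ↔ d ≤ a ⊎ x := by
  rw [hord, hord, sle_iff_cpl_add_eq_one hmv, sle_iff_cpl_add_eq_one hmv, odot, cpl_cpl,
    cpl_cpl, add_assoc]

lemma add_inf (a b c : E) : a ⊎ (b ⊓ c) = (a ⊎ b) ⊓ (a ⊎ c) :=
  GaloisConnection.u_inf fun _ _ => odot_cpl_le_iff hmv hord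

end MV

section Distrib

variable [Lattice E] (hord : ∀ a b : E, a ≤ b ↔ sle a b)
  (hdistrib : ∀ a b c : E, (a ⊎ b) ⊓ (a ⊎ c) = a ⊎ (b ⊓ c))
include hord hdistrib

lemma inf_eq_scap (x y : E) : x ⊓ y = scap x y := by
  have hy : y′ ⊎ x = y′ ⊎ (x ⊓ y) := by
    have := hdistrib y′ x y
    rwa [add_comm y′ y, add_cpl, inf_eq_left.mpr ((hord _ _).mpr (sle_one _))] at this
  calc x ⊓ y = scap (x ⊓ y) y := (hord _ _).mp inf_le_right
    _ = scap x y := by rw [scap, scap, add_comm _ y′, ← hy, add_comm]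

lemma scup_comm_of_add_inf (a b : E) : scup a b = scup b a := by
  apply cpl_injective
  rw [← cpl_cpl a, ← cpl_cpl b, ← scap_eq_cpl_scup_cpl, ← scap_eq_cpl_scup_cpl,
    ← inf_eq_scap hord hdistrib, ← inf_eq_scap hord hdistrib, inf_comm]

end Distrib

end SAlg

/-- A lattice-ordered QMV algebra is an MV algebra iff
(a ⊞ b) ∧ (a ⊞ c) = a ⊞ (b ∧ c) for all a, b, c. -/
theorem qmv_mv_iff_distrib {E : Type*} [QMV E] [Lattice E]
    (hord : ∀ a b : E, a ≤ b ↔ SAlg.sle a b) :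
    (∀ a b : E, SAlg.add (SAlg.cpl (SAlg.add (SAlg.cpl a) b)) b
        = SAlg.add (SAlg.cpl (SAlg.add a (SAlg.cpl b))) a)
    ↔ (∀ a b c : E, SAlg.add a b ⊓ SAlg.add a c = SAlg.add a (b ⊓ c)) := by
  rw [SAlg.mv_iff_scup_comm]
  exact ⟨fun hmv a b c => (SAlg.add_inf hmv hord a b c).symm,
    SAlg.scup_comm_of_add_inf hord⟩
end

section
/- For any effect algebra (P, ⊕, 0, 1), the total operation ⊞ defined by a ⊞ b = a ⊕ b when a ⊕ b is defined and a ⊞ b = 1 otherwise makes (P, ⊞, ', 0, 1) into an S-algebra; that is, ⊞ is commutative and associative, a ⊞ a' = 1, a ⊞ 0 = a, a'' = a, and a ⊞ 1 = 1. -/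
/-!
Associativity of `⊞` comes from the partial sum being associative as an `Option`-valued
operation: by (E2) and its mirror image, `a ⊕ (b ⊕ c)` is defined exactly when `(a ⊕ b) ⊕ c` is,
and then the two agree. When they are undefined both sides of the `⊞`-identity are `1`, because
`1` absorbs: `x ⊕ 1` is defined only for `x = 0`, and `0` is neutral.
-/

/-- An effect algebra, with a partial sum modelled via `Option`. -/
class EffectAlg (P : Type*) where
  zero : P
  one : P
  padd : P → P → Option P
  zero_ne_one : zero ≠ one
  /-- (E1) commutativity. -/
  padd_comm : ∀ a b : P, padd a b = padd b a
  /-- (E2) associativity where defined. -/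
  padd_assoc : ∀ a b c bc s : P, padd b c = some bc → padd a bc = some s →
    ∃ ab : P, padd a b = some ab ∧ padd ab c = some s
  /-- (E3) orthosupplement. -/
  cpl : P → P
  padd_cpl : ∀ a : P, padd a (cpl a) = some one
  cpl_unique : ∀ a b : P, padd a b = some one → b = cpl a
  /-- (E4) zero-one law. -/
  one_law : ∀ a b : P, padd one a = some b → a = zero

namespace EffectAlg
variable {P : Type*} [EffectAlg P]
/-- The totalized sum: a ⊞ b = a ⊕ b if defined, 1 otherwise. -/
def bplus (a b : P) : P := (padd a b).getD one
/-- a ⊙ b = (a' ⊞ b')'. -/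
def odot (a b : P) : P := cpl (bplus (cpl a) (cpl b))
/-- a ⊓ b = (a ⊞ b') ⊙ b. -/
def scap (a b : P) : P := odot (bplus a (cpl b)) b
end EffectAlg

namespace EffectAlg

variable {P : Type*} [EffectAlg P]

lemma cpl_cpl (a : P) : cpl (cpl a) = a :=
  (cpl_unique (cpl a) a (padd_comm (cpl a) a ▸ padd_cpl a)).symm

lemma cpl_injective : Function.Injective (cpl : P → P) :=
  Function.LeftInverse.injective cpl_cpl

lemma cpl_one : (cpl one : P) = zero :=
  one_law (cpl one) one (padd_cpl one)

lemma cpl_zero : cpl (zero : P) = one := by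
  rw [← cpl_one, cpl_cpl]

/-- Adding `0` to `a ⊕ a' = 1` gives `(0 ⊕ a) ⊕ a' = 1`, so `0 ⊕ a` and `a` share a supplement. -/
lemma padd_zero (a : P) : padd a zero = some a := by
  have hzero_one : padd (zero : P) one = some one := by
    simpa only [cpl_zero] using padd_cpl (zero : P)
  obtain ⟨b, hb, hb_one⟩ := padd_assoc zero a (cpl a) one one (padd_cpl a) hzero_one
  obtain rfl : b = a := cpl_injective (cpl_unique b (cpl a) hb_one).symm
  rw [padd_comm, hb]

lemma padd_assoc' (a b c ab s : P) (hab : padd a b = some ab) (hs : padd ab c = some s) :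
    ∃ bc : P, padd b c = some bc ∧ padd a bc = some s := by
  rw [padd_comm] at hab hs
  obtain ⟨cb, hcb, hs'⟩ := padd_assoc c b a ab s hab hs
  exact ⟨cb, padd_comm b c ▸ hcb, padd_comm a cb ▸ hs'⟩

lemma padd_bind_assoc (a b c : P) :
    (padd b c).bind (padd a) = (padd a b).bind (padd · c) := by
  ext s
  simp only [Option.bind_eq_some_iff]
  constructor
  · rintro ⟨bc, hbc, hs⟩
    exact padd_assoc a b c bc s hbc hs
  · rintro ⟨ab, hab, hs⟩
    exact padd_assoc' a b c ab s hab hs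

lemma bplus_eq_of_padd_eq_some {a b c : P} (h : padd a b = some c) : bplus a b = c := by
  rw [bplus, h, Option.getD_some]

lemma bplus_eq_one_of_padd_eq_none {a b : P} (h : padd a b = none) : bplus a b = one := by
  rw [bplus, h, Option.getD_none]

lemma bplus_comm (a b : P) : bplus a b = bplus b a := by
  rw [bplus, bplus, padd_comm]

lemma bplus_cpl (a : P) : bplus a (cpl a) = one :=
  bplus_eq_of_padd_eq_some (padd_cpl a)

lemma bplus_zero (a : P) : bplus a zero = a :=
  bplus_eq_of_padd_eq_some (padd_zero a)

lemma bplus_one (a : P) : bplus a one = one := by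
  cases h : padd a one with
  | none => exact bplus_eq_one_of_padd_eq_none h
  | some b =>
    obtain rfl : a = zero := one_law a b (padd_comm a one ▸ h)
    rw [bplus_comm, bplus_zero]

lemma one_bplus (a : P) : bplus one a = one := by
  rw [bplus_comm, bplus_one]

lemma bplus_bplus_right (a b c : P) :
    bplus a (bplus b c) = ((padd b c).bind (padd a)).getD one := by
  cases h : padd b c with
  | none => rw [bplus_eq_one_of_padd_eq_none h, bplus_one, Option.bind_none, Option.getD_none]
  | some bc => rw [bplus_eq_of_padd_eq_some h, Option.bind_some, bplus]

lemma bplus_bplus_left (a b c : P) :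
    bplus (bplus a b) c = ((padd a b).bind (padd · c)).getD one := by
  cases h : padd a b with
  | none => rw [bplus_eq_one_of_padd_eq_none h, one_bplus, Option.bind_none, Option.getD_none]
  | some ab => rw [bplus_eq_of_padd_eq_some h, Option.bind_some, bplus]

lemma bplus_assoc (a b c : P) : bplus a (bplus b c) = bplus (bplus a b) c := by
  rw [bplus_bplus_right, bplus_bplus_left, padd_bind_assoc]

end EffectAlg

/-- Totalizing the partial sum of an effect algebra yields an S-algebra. -/
theorem extended_effect_is_salg {P : Type*} [EffectAlg P] :
    (∀ a b : P, EffectAlg.bplus a b = EffectAlg.bplus b a) ∧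
    (∀ a b c : P, EffectAlg.bplus a (EffectAlg.bplus b c)
        = EffectAlg.bplus (EffectAlg.bplus a b) c) ∧
    (∀ a : P, EffectAlg.bplus a (EffectAlg.cpl a) = EffectAlg.one) ∧
    (∀ a : P, EffectAlg.bplus a EffectAlg.zero = a) ∧
    (∀ a : P, EffectAlg.cpl (EffectAlg.cpl a) = a) ∧
    (∀ a : P, EffectAlg.bplus a EffectAlg.one = EffectAlg.one) :=
  ⟨EffectAlg.bplus_comm, EffectAlg.bplus_assoc, EffectAlg.bplus_cpl, EffectAlg.bplus_zero,
    EffectAlg.cpl_cpl, EffectAlg.bplus_one⟩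
end
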